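/- arXiv:0801.2457 — 6 statements merged into one kernel-verified Lean document; each statement's English description precedes it below -/
import Mathlib

section
/- Let N > 0, d > 0 and A > 0. If a real number z with z² ≠ 1 satisfies the dispersion relation F(z) + A = 0, then z belongs to I₁ ∪ I₂, i.e. either −√(1+d²) < z < −1 or 1 < z < √(1+d²). -/
/-- `F N d z = (1 - N z)² (1 - d²/(z² - 1))`. -/
noncomputable def F (N d z : ℝ) : ℝ := (1 - N * z) ^ 2 * (1 - d ^ 2 / (z ^ 2 - 1))

/-- The interval `I₁ = (-√(1+d²), -1)`. -/
noncomputable def I₁ (d : ℝ) : Set ℝ := Set.Ioo (-Real.sqrt (1 + d ^ 2)) (-1)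

/-- The interval `I₂ = (1, √(1+d²))`. -/
noncomputable def I₂ (d : ℝ) : Set ℝ := Set.Ioo 1 (Real.sqrt (1 + d ^ 2))

theorem mem_I₁_union_I₂_iff {d z : ℝ} :
    z ∈ I₁ d ∪ I₂ d ↔ 1 < z ^ 2 ∧ z ^ 2 < 1 + d ^ 2 := by
  rw [one_lt_sq_iff_one_lt_abs, ← sq_abs, ← Real.lt_sqrt (abs_nonneg z)]
  simp only [I₁, I₂, Set.mem_union, Set.mem_Ioo]
  rcases le_or_gt 0 z with hz | hz
  · rw [abs_of_nonneg hz]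
    constructor
    · rintro (⟨_, h⟩ | h)
      · linarith
      · exact h
    · exact Or.inr
  · rw [abs_of_neg hz]
    constructor
    · rintro (⟨h₁, h₂⟩ | ⟨h, _⟩)
      · exact ⟨by linarith, by linarith⟩
      · linarith
    · rintro ⟨h₁, h₂⟩
      exact Or.inl ⟨by linarith, by linarith⟩

/-- Since `(1 - N z)² ≥ 0`, `F < 0` forces `d²/(z² - 1) > 1`, i.e. `0 < z² - 1 < d²`
(at `z² = 1` the junk value `d² / 0 = 0` rules this out). -/
theorem one_lt_sq_and_sq_lt_of_F_neg {N d z : ℝ} (h : F N d z < 0) :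
    1 < z ^ 2 ∧ z ^ 2 < 1 + d ^ 2 := by
  have hfactor : 1 - d ^ 2 / (z ^ 2 - 1) < 0 := neg_of_mul_neg_right h (sq_nonneg _)
  rcases one_lt_div_iff.mp (by linarith : 1 < d ^ 2 / (z ^ 2 - 1)) with ⟨hpos, hlt⟩ | ⟨hneg, hlt⟩
  · exact ⟨by linarith, by linarith⟩
  · linarith [sq_nonneg d]

theorem stmt_0_general (N d A : ℝ) (hA : 0 < A)
    (z : ℝ) (hroot : F N d z + A = 0) :
    z ∈ I₁ d ∪ I₂ d :=
  mem_I₁_union_I₂_iff.mpr (one_lt_sq_and_sq_lt_of_F_neg (by linarith))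

/-- Every real root of the dispersion relation `F(z) + A = 0` lies in `I₁ ∪ I₂`. -/
theorem stmt_0 (N d A : ℝ) (hN : 0 < N) (hd : 0 < d) (hA : 0 < A)
    (z : ℝ) (hz : z ^ 2 ≠ 1) (hroot : F N d z + A = 0) :
    z ∈ I₁ d ∪ I₂ d :=
  stmt_0_general N d A hA z hroot
end

section
/- Let N > 0 with N ≠ 1, d > 0 and A > 0. Then the dispersion relation F(z) + A = 0 has at least one solution in the interval I₁ and at least one solution in the interval I₂. -/
open Filter Set Topology

lemma F_neg (N d z : ℝ) : F N d (-z) = F (-N) d z := by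
  unfold F; ring

lemma F_sqrt_one_add_sq (N : ℝ) {d : ℝ} (hd : d ≠ 0) : F N d √(1 + d ^ 2) = 0 := by
  rw [F, Real.sq_sqrt (by positivity), add_sub_cancel_left, div_self (pow_ne_zero 2 hd)]
  ring

lemma continuousAt_F (N d : ℝ) {z : ℝ} (hz : z ^ 2 ≠ 1) : ContinuousAt (F N d) z := by
  unfold F
  exact ContinuousAt.mul (by fun_prop) (continuousAt_const.sub
    (continuousAt_const.div (by fun_prop) (sub_ne_zero.mpr hz)))

lemma one_lt_sqrt_one_add_sq {d : ℝ} (hd : d ≠ 0) : 1 < √(1 + d ^ 2) := by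
  rw [Real.lt_sqrt zero_le_one]
  linarith [sq_pos_of_ne_zero hd]

lemma tendsto_F_nhdsGT_one {N d : ℝ} (hN : N ≠ 1) (hd : d ≠ 0) :
    Tendsto (F N d) (𝓝[>] 1) atBot := by
  have h_factor : Tendsto (fun z : ℝ => (1 - N * z) ^ 2) (𝓝[>] 1) (𝓝 ((1 - N) ^ 2)) :=
    tendsto_nhdsWithin_of_tendsto_nhds
      ((by fun_prop : Continuous fun z : ℝ => (1 - N * z) ^ 2).tendsto' 1 _ (by ring))
  have h_denom : Tendsto (fun z : ℝ => z ^ 2 - 1) (𝓝[>] 1) (𝓝[>] 0) := by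
    refine tendsto_nhdsWithin_of_tendsto_nhds_of_eventually_within _ ?_ ?_
    · exact tendsto_nhdsWithin_of_tendsto_nhds
        ((by fun_prop : Continuous fun z : ℝ => z ^ 2 - 1).tendsto' 1 0 (by ring))
    · filter_upwards [self_mem_nhdsWithin] with z (hz : 1 < z)
      show 0 < z ^ 2 - 1
      nlinarith
  have h_pole : Tendsto (fun z : ℝ => 1 - d ^ 2 / (z ^ 2 - 1)) (𝓝[>] 1) atBot := by
    have := (tendsto_inv_nhdsGT_zero.comp h_denom).const_mul_atTop (sq_pos_of_ne_zero hd)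
    exact tendsto_atBot_add_const_left _ 1 (tendsto_neg_atTop_atBot.comp this)
  exact h_factor.pos_mul_atBot (sq_pos_of_ne_zero (sub_ne_zero.mpr hN.symm)) h_pole

theorem Iio_zero_subset_image_F_I₂ {N d : ℝ} (hN : N ≠ 1) (hd : d ≠ 0) :
    Iio 0 ⊆ F N d '' I₂ d := by
  have h_one_lt := one_lt_sqrt_one_add_sq hd
  have h_right : Tendsto (F N d) (𝓝[<] √(1 + d ^ 2)) (𝓝 0) := by
    rw [← F_sqrt_one_add_sq N hd]
    refine (continuousAt_F N d ?_).tendsto.mono_left nhdsWithin_le_nhds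
    nlinarith
  refine isPreconnected_Ioo.intermediate_value_Iio
    (le_principal_iff.mpr (Ioo_mem_nhdsGT h_one_lt)) (le_principal_iff.mpr (Ioo_mem_nhdsLT h_one_lt))
    (fun z hz => ?_) (tendsto_F_nhdsGT_one hN hd) h_right
  exact (continuousAt_F N d (by nlinarith [hz.1])).continuousWithinAt

theorem Iio_zero_subset_image_F_I₁ {N d : ℝ} (hN : N ≠ -1) (hd : d ≠ 0) :
    Iio 0 ⊆ F N d '' I₁ d := by
  rintro y hy
  obtain ⟨z, ⟨hz₁, hz₂⟩, rfl⟩ :=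
    Iio_zero_subset_image_F_I₂ (N := -N) (by contrapose! hN; linarith) hd hy
  exact ⟨-z, ⟨neg_lt_neg hz₂, neg_lt_neg hz₁⟩, F_neg N d z⟩

/-- The dispersion relation `F(z) + A = 0` has at least one solution in `I₁`
and at least one in `I₂`. -/
theorem stmt_1 (N d A : ℝ) (hN : 0 < N) (hN1 : N ≠ 1) (hd : 0 < d) (hA : 0 < A) :
    (∃ z ∈ I₁ d, F N d z + A = 0) ∧ (∃ z ∈ I₂ d, F N d z + A = 0) := by
  have h_neg : -A ∈ Iio (0 : ℝ) := neg_lt_zero.mpr hA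
  obtain ⟨z₁, hz₁, hF₁⟩ := Iio_zero_subset_image_F_I₁ (N := N) (by linarith) hd.ne' h_neg
  obtain ⟨z₂, hz₂, hF₂⟩ := Iio_zero_subset_image_F_I₂ hN1 hd.ne' h_neg
  exact ⟨⟨z₁, hz₁, by rw [hF₁]; ring⟩, ⟨z₂, hz₂, by rw [hF₂]; ring⟩⟩
end

section
/- Let N > 0, d > 0 and A > 0. Then F is strictly decreasing on the interval I₁ (indeed F'(z) < 0 for all −√(1+d²) < z < −1), and consequently the dispersion relation F(z) + A = 0 has exactly one solution in I₁. -/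
lemma hasDerivAt_F (N d : ℝ) {z : ℝ} (hz : z ^ 2 - 1 ≠ 0) :
    HasDerivAt (F N d)
      (2 * (1 - N * z) * (d ^ 2 * (z - N) - N * (z ^ 2 - 1) ^ 2) / (z ^ 2 - 1) ^ 2) z := by
  have hsq : HasDerivAt (fun z : ℝ => (1 - N * z) ^ 2) (2 * (1 - N * z) * (-N)) z := by
    simpa using (((hasDerivAt_id z).const_mul N).const_sub 1).fun_pow 2
  have hfrac : HasDerivAt (fun z : ℝ => 1 - d ^ 2 / (z ^ 2 - 1))
      (d ^ 2 * (2 * z) / (z ^ 2 - 1) ^ 2) z := by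
    simpa [neg_div] using
      ((hasDerivAt_const z (d ^ 2)).div ((hasDerivAt_pow 2 z).sub_const 1) hz).const_sub 1
  refine HasDerivAt.congr_deriv (f := F N d) (hsq.fun_mul hfrac) ?_
  field_simp
  ring

lemma sq_sub_one_pos_of_lt_neg_one {z : ℝ} (hz : z < -1) : 0 < z ^ 2 - 1 := by
  nlinarith

lemma continuousOn_F_Iio (N d : ℝ) : ContinuousOn (F N d) (Set.Iio (-1)) := fun _ hz =>
  (hasDerivAt_F N d (sq_sub_one_pos_of_lt_neg_one hz).ne').continuousAt.continuousWithinAt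

lemma deriv_F_neg {N : ℝ} (d : ℝ) (hN : 0 < N) {z : ℝ} (hz : z < -1) :
    deriv (F N d) z < 0 := by
  have hw := sq_sub_one_pos_of_lt_neg_one hz
  rw [(hasDerivAt_F N d hw.ne').deriv]
  refine div_neg_of_neg_of_pos (mul_neg_of_pos_of_neg (by nlinarith) ?_) (by positivity)
  nlinarith [mul_nonpos_of_nonneg_of_nonpos (sq_nonneg d) (by linarith : z - N ≤ 0),
    mul_pos hN (pow_pos hw 2)]

lemma strictAntiOn_F_Iio {N : ℝ} (d : ℝ) (hN : 0 < N) :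
    StrictAntiOn (F N d) (Set.Iio (-1)) :=
  strictAntiOn_of_deriv_neg (convex_Iio _) (continuousOn_F_Iio N d) fun _ hz =>
    deriv_F_neg d hN (by simpa using hz)

lemma F_eq_zero_of_sq_sub_one_eq (N : ℝ) {d z : ℝ} (hd : d ≠ 0) (hz : z ^ 2 - 1 = d ^ 2) :
    F N d z = 0 := by
  rw [F, hz, div_self (pow_ne_zero 2 hd)]
  ring

lemma F_lt_neg_of_sq_sub_one_eq {N d z A : ℝ} (hN : 0 ≤ N) (hd : d ≠ 0) (hA : 0 < A)
    (hz : z ≤ 0) (hzd : z ^ 2 - 1 = d ^ 2 / (2 * (1 + A))) : F N d z < -A := by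
  have hfactor : 1 - d ^ 2 / (z ^ 2 - 1) = -1 - 2 * A := by
    rw [hzd, div_div_cancel₀ (by positivity)]
    ring
  have hone : 1 ≤ (1 - N * z) ^ 2 := one_le_pow₀ (by nlinarith)
  rw [F, hfactor]
  nlinarith

lemma exists_mem_I₁_F_add_eq_zero {N d A : ℝ} (hN : 0 < N) (hd : 0 < d) (hA : 0 < A) :
    ∃ z ∈ I₁ d, F N d z + A = 0 := by
  set a := -Real.sqrt (1 + d ^ 2)
  set c := -Real.sqrt (1 + d ^ 2 / (2 * (1 + A)))
  have hd' : 0 < d ^ 2 / (2 * (1 + A)) := by positivity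
  have ha : a ^ 2 - 1 = d ^ 2 := by
    rw [neg_sq, Real.sq_sqrt (by positivity)]
    ring
  have hc : c ^ 2 - 1 = d ^ 2 / (2 * (1 + A)) := by
    rw [neg_sq, Real.sq_sqrt (by positivity)]
    ring
  have hc1 : c < -1 := by
    rw [neg_lt_neg_iff, Real.lt_sqrt zero_le_one]
    linarith
  have hac : a < c := by
    refine neg_lt_neg (Real.sqrt_lt_sqrt (by positivity) ?_)
    have : d ^ 2 / (2 * (1 + A)) < d ^ 2 := div_lt_self (by positivity) (by linarith)
    linarith
  have hFc : F N d c < -A := F_lt_neg_of_sq_sub_one_eq hN.le hd.ne' hA (by linarith) hc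
  have hFa : F N d a = 0 := F_eq_zero_of_sq_sub_one_eq N hd.ne' ha
  have hcont : ContinuousOn (F N d) (Set.Icc a c) :=
    (continuousOn_F_Iio N d).mono fun _ hx => hx.2.trans_lt hc1
  obtain ⟨z, hz, hFz⟩ := intermediate_value_Ioo' hac.le hcont ⟨hFc, by linarith⟩
  exact ⟨z, ⟨hz.1, hz.2.trans hc1⟩, by linarith⟩

/-- `F' < 0` on `I₁`, `F` is strictly decreasing there, and the dispersion relation
`F(z) + A = 0` has exactly one solution in `I₁`. -/
theorem stmt_2 (N d A : ℝ) (hN : 0 < N) (hd : 0 < d) (hA : 0 < A) :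
    (∀ z ∈ I₁ d, deriv (F N d) z < 0) ∧
    StrictAntiOn (F N d) (I₁ d) ∧
    (∃! z, z ∈ I₁ d ∧ F N d z + A = 0) := by
  have hanti : StrictAntiOn (F N d) (I₁ d) := (strictAntiOn_F_Iio d hN).mono fun _ hz => hz.2
  refine ⟨fun z hz => deriv_F_neg d hN hz.2, hanti, ?_⟩
  obtain ⟨z, hz, hFz⟩ := exists_mem_I₁_F_add_eq_zero hN hd hA
  exact ⟨z, ⟨hz, hFz⟩, fun y ⟨hy, hFy⟩ => hanti.injOn hy hz (by linarith)⟩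
end

section
/- Let 0 < N < 1 and d > 0 with d² > N⁻² − 1. Then the equation φ(z) = 0 has exactly one root z₀₁ in the interval I₂ = (1, √(1+d²)); moreover z₀₁ lies in the subinterval (1/N, √(1+d²)) and F(z₀₁) < 0. -/
/-- `φ N d z = 1/d² + (1 - z/N)/(z² - 1)²`. -/
noncomputable def phi (N d z : ℝ) : ℝ := 1 / d ^ 2 + (1 - z / N) / (z ^ 2 - 1) ^ 2

/-!
On `z > 1`, clearing the denominator turns the zeros of `φ` into those of
`ψ(z) = (z² - 1)²/d² + 1 - z/N`. This function is strictly convex on `[1, ∞)` and negative at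
`z = 1`, so it vanishes at most once to the right of `1`. The hypothesis `d² > N⁻² - 1` gives
`ψ(1/N) < 0 < ψ(√(1 + d²))`, and the intermediate value theorem puts the zero in
`(1/N, √(1 + d²))`. There `N z > 1` and `z² - 1 < d²`, which force `F(z) < 0`.
-/

open Set

theorem StrictConvexOn.eq_of_apply_eq_of_apply_lt {𝕜 : Type*} [Field 𝕜] [LinearOrder 𝕜]
    [IsStrictOrderedRing 𝕜] {s : Set 𝕜} {f : 𝕜 → 𝕜} (hf : StrictConvexOn 𝕜 s f)
    {a x y c : 𝕜} (ha : a ∈ s) (hx : x ∈ s) (hy : y ∈ s) (hax : a < x) (hay : a < y)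
    (hfa : f a < c) (hfx : f x = c) (hfy : f y = c) : x = y := by
  wlog hxy : x < y generalizing x y
  · rcases (not_lt.mp hxy).lt_or_eq with hyx | rfl
    · exact (this hy hx hay hax hfy hfx hyx).symm
    · rfl
  have hsec := hf.secant_strict_mono ha hx hy hax.ne' hay.ne' hxy
  rw [hfx, hfy] at hsec
  have : (c - f a) / (y - a) < (c - f a) / (x - a) :=
    div_lt_div_of_pos_left (sub_pos.2 hfa) (sub_pos.2 hax) (by linarith)
  exact absurd hsec this.not_gt

theorem strictConvexOn_sq_sub_one_sq : StrictConvexOn ℝ (Ici 1) fun z : ℝ => (z ^ 2 - 1) ^ 2 := by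
  refine ⟨convex_Ici 1, fun x hx y hy hxy a b ha hb hab => ?_⟩
  simp only [mem_Ici, smul_eq_mul] at *
  obtain rfl : b = 1 - a := by linarith
  have jensen_gap (u v : ℝ) :
      a * u ^ 2 + (1 - a) * v ^ 2 - (a * u + (1 - a) * v) ^ 2 = a * (1 - a) * (u - v) ^ 2 := by
    ring
  have hmid : 1 ≤ a * x + (1 - a) * y := by nlinarith
  have hgap : (a * x + (1 - a) * y) ^ 2 - 1 < a * (x ^ 2 - 1) + (1 - a) * (y ^ 2 - 1) := by
    have : 0 < a * (1 - a) * (x - y) ^ 2 := by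
      have := sub_ne_zero.2 hxy
      positivity
    linarith [jensen_gap x y]
  calc ((a * x + (1 - a) * y) ^ 2 - 1) ^ 2
      < (a * (x ^ 2 - 1) + (1 - a) * (y ^ 2 - 1)) ^ 2 := by gcongr; nlinarith
    _ ≤ a * (x ^ 2 - 1) ^ 2 + (1 - a) * (y ^ 2 - 1) ^ 2 := by
      have : 0 ≤ a * (1 - a) * (x ^ 2 - 1 - (y ^ 2 - 1)) ^ 2 := by positivity
      linarith [jensen_gap (x ^ 2 - 1) (y ^ 2 - 1)]

noncomputable def psi (N d z : ℝ) : ℝ := (z ^ 2 - 1) ^ 2 / d ^ 2 + (1 - z / N)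

theorem phi_mul_sq_sub_one_sq {N d z : ℝ} (hz : z ^ 2 ≠ 1) :
    phi N d z * (z ^ 2 - 1) ^ 2 = psi N d z := by
  have : (z ^ 2 - 1) ^ 2 ≠ 0 := pow_ne_zero 2 (sub_ne_zero.2 hz)
  rw [phi, psi, add_mul, div_mul_cancel₀ _ this]
  ring

theorem phi_eq_zero_iff {N d z : ℝ} (hz : z ^ 2 ≠ 1) : phi N d z = 0 ↔ psi N d z = 0 := by
  rw [← phi_mul_sq_sub_one_sq hz, mul_eq_zero, or_iff_left (pow_ne_zero 2 (sub_ne_zero.2 hz))]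

theorem strictConvexOn_psi (N : ℝ) {d : ℝ} (hd : d ≠ 0) : StrictConvexOn ℝ (Ici 1) (psi N d) := by
  refine ⟨convex_Ici 1, fun x hx y hy hxy a b ha hb hab => ?_⟩
  have hq := div_lt_div_of_pos_right (strictConvexOn_sq_sub_one_sq.2 hx hy hxy ha hb hab)
    (by positivity : (0 : ℝ) < d ^ 2)
  simp only [psi, smul_eq_mul] at hq ⊢
  linear_combination hq - hab

theorem F_neg_s9 {N d z : ℝ} (hz : z ∈ I₂ d) (hNz : N * z ≠ 1) : F N d z < 0 := by
  obtain ⟨hz1, hzs⟩ := hz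
  have hz2 : z ^ 2 < 1 + d ^ 2 := by
    rw [← Real.sq_sqrt (by positivity : (0 : ℝ) ≤ 1 + d ^ 2)]
    gcongr
  have hfrac : 1 < d ^ 2 / (z ^ 2 - 1) := by
    rw [one_lt_div (by nlinarith)]
    linarith
  exact mul_neg_of_pos_of_neg (sq_pos_of_ne_zero (sub_ne_zero.2 hNz.symm)) (by linarith)

theorem psi_one_neg {N d : ℝ} (hN : 0 < N) (hN1 : N < 1) : psi N d 1 < 0 := by
  have := one_lt_one_div hN hN1
  norm_num [psi] at this ⊢
  exact this

theorem psi_one_div_neg {N d : ℝ} (hN : 0 < N) (hN1 : N < 1) (hd : 1 / N ^ 2 - 1 < d ^ 2) :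
    psi N d (1 / N) < 0 := by
  have ht : 0 < 1 / N ^ 2 - 1 :=
    sub_pos.2 (one_lt_one_div (by positivity) (pow_lt_one₀ hN.le hN1 two_ne_zero))
  have hsq : (1 / N ^ 2 - 1) ^ 2 / d ^ 2 < 1 / N ^ 2 - 1 := by
    rw [div_lt_iff₀ (ht.trans hd), sq]
    exact mul_lt_mul_of_pos_left hd ht
  have : 1 - 1 / N / N = -(1 / N ^ 2 - 1) := by ring
  rw [psi, div_pow, one_pow, this]
  linarith

theorem one_div_lt_sqrt_one_add_sq {N d : ℝ} (hN : 0 < N) (hd : 1 / N ^ 2 - 1 < d ^ 2) :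
    1 / N < √(1 + d ^ 2) := by
  rw [Real.lt_sqrt (by positivity), div_pow, one_pow]
  linarith

theorem psi_sqrt_pos {N d : ℝ} (hd : d ≠ 0) (hs : 1 / N < √(1 + d ^ 2)) :
    0 < psi N d √(1 + d ^ 2) := by
  have hs2 := Real.sq_sqrt (by positivity : (0 : ℝ) ≤ 1 + d ^ 2)
  have : psi N d √(1 + d ^ 2) = √(1 + d ^ 2) * (√(1 + d ^ 2) - 1 / N) := by
    rw [psi, hs2]
    field_simp
    linear_combination -d ^ 2 * hs2
  rw [this]
  exact mul_pos (Real.sqrt_pos.2 (by positivity)) (sub_pos.2 hs)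

/-- For `0 < N < 1` and `d² > N⁻² - 1`, the equation `φ(z) = 0` has exactly one root
`z₀₁` in `I₂`; moreover `z₀₁ ∈ (1/N, √(1+d²))` and `F(z₀₁) < 0`. -/
theorem stmt_9 (N d : ℝ) (hN : 0 < N) (hN1 : N < 1) (hd : 0 < d)
    (hcase : 1 / N ^ 2 - 1 < d ^ 2) :
    ∃ z₀₁ : ℝ, (z₀₁ ∈ I₂ d ∧ phi N d z₀₁ = 0) ∧
      (∀ z ∈ I₂ d, phi N d z = 0 → z = z₀₁) ∧
      z₀₁ ∈ Set.Ioo (1 / N) (Real.sqrt (1 + d ^ 2)) ∧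
      F N d z₀₁ < 0 := by
  have hs := one_div_lt_sqrt_one_add_sq hN hcase
  have hpsi : Continuous (psi N d) := by unfold psi; fun_prop
  obtain ⟨z₀, hz₀, hψz₀⟩ := intermediate_value_Ioo hs.le hpsi.continuousOn
    ⟨psi_one_div_neg hN hN1 hcase, psi_sqrt_pos hd.ne' hs⟩
  have hz₀I₂ : z₀ ∈ I₂ d := ⟨(one_lt_one_div hN hN1).trans hz₀.1, hz₀.2⟩
  have hroots {z : ℝ} (hz : z ∈ I₂ d) : phi N d z = 0 ↔ psi N d z = 0 :=
    phi_eq_zero_iff (one_lt_pow₀ hz.1 two_ne_zero).ne'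
  refine ⟨z₀, ⟨hz₀I₂, (hroots hz₀I₂).2 hψz₀⟩, fun z hz hφz => ?_, hz₀, F_neg_s9 hz₀I₂ ?_⟩
  · exact (strictConvexOn_psi N hd.ne').eq_of_apply_eq_of_apply_lt self_mem_Ici hz.1.le
      hz₀I₂.1.le hz.1 hz₀I₂.1 (psi_one_neg hN hN1) ((hroots hz).1 hφz) hψz₀
  · exact ((div_lt_iff₀' hN).1 hz₀.1).ne'
end

section
/- Let M > 0. Then the function f(d) = d² − (16M²/(27d²))·((8M²/d² − 6)·√(1 − 3d²/(4M²)) + 8M²/d² − 9), defined for 0 < d < M, has exactly one zero d₀(M) in the open interval (0, M). (Note that f(d) → −∞ as d → 0⁺ and f(d) → M² > 0 as d → M⁻.) -/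
/-- `f(d, M) = d² - (16M²/(27d²))((8(M/d)² - 6)√(1 - 3d²/(4M²)) + 8(M/d)² - 9)`. -/
noncomputable def f (d M : ℝ) : ℝ :=
  d ^ 2 - (16 * M ^ 2 / (27 * d ^ 2)) *
    ((8 * (M / d) ^ 2 - 6) * Real.sqrt (1 - 3 * d ^ 2 / (4 * M ^ 2))
      + 8 * (M / d) ^ 2 - 9)

/-!
Write `s = √(1 - 3d²/(4M²))`. Eliminating `(M/d)²` through `3d² = 4M²(1 - s²)` gives
`27 d⁴ f(d, M) = 27 d⁶ - 64 M⁴ (s + 1)² (2s - 1)`. On `[0, M]` the first term strictly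
increases with `d`, while `s ≥ 0` decreases and `(s + 1)²(2s - 1) = 2s³ + 3s² - 1` increases on
`s ≥ 0`, so the right-hand side is strictly increasing. It equals `-256 M⁴` at `d = 0` and
`27 M⁶` at `d = M` (where `s = 1/2`), so it has exactly one zero in `(0, M)`.
-/

open Set

noncomputable def fRadical (d M : ℝ) : ℝ := √(1 - 3 * d ^ 2 / (4 * M ^ 2))

noncomputable def fNumerator (d M : ℝ) : ℝ :=
  27 * d ^ 6 - 64 * M ^ 4 * (fRadical d M + 1) ^ 2 * (2 * fRadical d M - 1)

lemma fRadicand_nonneg {d M : ℝ} (hd : 0 ≤ d) (hdM : d ≤ M) :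
    0 ≤ 1 - 3 * d ^ 2 / (4 * M ^ 2) := by
  rcases hd.eq_or_lt with rfl | hd
  · norm_num
  have hM : 0 < M := hd.trans_le hdM
  rw [sub_nonneg, div_le_one (by positivity)]
  nlinarith

lemma f_mul_eq_fNumerator {d M : ℝ} (hd : 0 < d) (hdM : d ≤ M) :
    f d M * (27 * d ^ 4) = fNumerator d M := by
  have hM : M ≠ 0 := (hd.trans_le hdM).ne'
  have hs : fRadical d M ^ 2 = 1 - 3 * d ^ 2 / (4 * M ^ 2) :=
    Real.sq_sqrt (fRadicand_nonneg hd.le hdM)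
  have hd2 : 3 * d ^ 2 = 4 * M ^ 2 * (1 - fRadical d M ^ 2) := by
    field_simp at hs
    linarith
  unfold f fNumerator
  rw [← fRadical]
  field_simp
  linear_combination (32 * M ^ 2 * fRadical d M + 48 * M ^ 2) * hd2

lemma f_eq_zero_iff {d M : ℝ} (hd : 0 < d) (hdM : d ≤ M) :
    f d M = 0 ↔ fNumerator d M = 0 := by
  rw [← f_mul_eq_fNumerator hd hdM, mul_eq_zero, or_iff_left (by positivity)]

lemma strictMonoOn_cubic : StrictMonoOn (fun s : ℝ => (s + 1) ^ 2 * (2 * s - 1)) (Ici 0) := by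
  intro a (ha : 0 ≤ a) b _ hab
  have hb : 0 < b := ha.trans_lt hab
  have hdiff : (b + 1) ^ 2 * (2 * b - 1) - (a + 1) ^ 2 * (2 * a - 1) =
      (b - a) * (2 * (a ^ 2 + a * b + b ^ 2) + 3 * (a + b)) := by ring
  have : 0 < (b - a) * (2 * (a ^ 2 + a * b + b ^ 2) + 3 * (a + b)) :=
    mul_pos (sub_pos.2 hab) (by positivity)
  linarith

lemma fRadical_strictAntiOn {M : ℝ} (hM : 0 < M) : StrictAntiOn (fRadical · M) (Icc 0 M) := by
  intro a ⟨ha, _⟩ b ⟨hb, hbM⟩ hab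
  apply Real.sqrt_lt_sqrt (fRadicand_nonneg hb hbM)
  gcongr

lemma fNumerator_strictMonoOn {M : ℝ} (hM : 0 < M) : StrictMonoOn (fNumerator · M) (Icc 0 M) := by
  intro a ha b hb hab
  have hpow : a ^ 6 < b ^ 6 := pow_lt_pow_left₀ hab ha.1 (by norm_num)
  have hcubic : (fRadical b M + 1) ^ 2 * (2 * fRadical b M - 1) <
      (fRadical a M + 1) ^ 2 * (2 * fRadical a M - 1) :=
    strictMonoOn_cubic (Real.sqrt_nonneg _) (Real.sqrt_nonneg _)
      (fRadical_strictAntiOn hM ha hb hab)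
  have hM4 : 0 < 64 * M ^ 4 := by positivity
  simp only [fNumerator, mul_assoc] at hcubic ⊢
  nlinarith [mul_lt_mul_of_pos_left hcubic hM4]

lemma continuous_fNumerator (M : ℝ) : Continuous (fNumerator · M) := by
  unfold fNumerator fRadical
  fun_prop

lemma fNumerator_zero (M : ℝ) : fNumerator 0 M = -256 * M ^ 4 := by
  norm_num [fNumerator, fRadical]
  ring

lemma fNumerator_self {M : ℝ} (hM : M ≠ 0) : fNumerator M M = 27 * M ^ 6 := by
  have hs : fRadical M M = 1 / 2 := by
    rw [fRadical, show 1 - 3 * M ^ 2 / (4 * M ^ 2) = (1 / 2 : ℝ) ^ 2 by field_simp; ring,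
      Real.sqrt_sq (by norm_num)]
  rw [fNumerator, hs]
  ring

/-- For each `M > 0`, the function `d ↦ f(d, M)` has exactly one zero `d₀(M)` in the
open interval `(0, M)`. -/
theorem stmt_17 (M : ℝ) (hM : 0 < M) :
    ∃! d₀ : ℝ, d₀ ∈ Set.Ioo 0 M ∧ f d₀ M = 0 := by
  have hsign : (0 : ℝ) ∈ Ioo (fNumerator 0 M) (fNumerator M M) := by
    rw [fNumerator_zero, fNumerator_self hM.ne']
    constructor <;> nlinarith [pow_pos hM 4, pow_pos hM 6]
  obtain ⟨d₀, hd₀, hroot⟩ :=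
    intermediate_value_Ioo hM.le (continuous_fNumerator M).continuousOn hsign
  refine ⟨d₀, ⟨hd₀, (f_eq_zero_iff hd₀.1 hd₀.2.le).2 hroot⟩, fun d ⟨hd, hfd⟩ => ?_⟩
  refine (fNumerator_strictMonoOn hM).injOn (Ioo_subset_Icc_self hd)
    (Ioo_subset_Icc_self hd₀) ?_
  rw [(f_eq_zero_iff hd.1 hd.2.le).1 hfd]
  exact hroot.symm
end

section
/- Let a > 0, b ≥ 0, k be real, A > 0 and u₂₀ be real. Then every complex root c of the quadratic equation (1 + A)·a² − ((1 + A)·b²·k² + 1)·(u₂₀ − c)² = 0 is real; explicitly, the two roots are c = u₂₀ ± a·√((1 + A)/((1 + A)·b²·k² + 1)). (Hence the flow of two superposed layers with equal unperturbed velocities u₁₀ = u₂₀ is linearly stable.) -/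
/-! Clearing the positive factor `D = (1 + A)b²k² + 1` turns the equation into
`(u₂₀ - c)² = (a s)²` with the real number `s = √((1 + A)/D)`, because `D s² = 1 + A`;
hence `c = u₂₀ ± a s`, both of which are real. -/

theorem eq_add_or_eq_sub_of_mul_sq_sub_mul_sq_eq_zero {K : Type*} [Field K] {N D a s u c : K}
    (hD : D ≠ 0) (hs : D * s ^ 2 = N) (h : N * a ^ 2 - D * (u - c) ^ 2 = 0) :
    c = u + a * s ∨ c = u - a * s := by
  have hsq : (u - c) ^ 2 = (a * s) ^ 2 := by
    apply mul_left_cancel₀ hD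
    linear_combination -h - a ^ 2 * hs
  rcases sq_eq_sq_iff_eq_or_eq_neg.mp hsq with h' | h'
  · exact Or.inr (by linear_combination -h')
  · exact Or.inl (by linear_combination -h')

theorem stmt_19_general (a b k A u₂₀ : ℝ) (hA : 0 < A) :
    ∀ c : ℂ,
      ((1 : ℂ) + (A : ℂ)) * (a : ℂ) ^ 2
        - (((1 : ℂ) + (A : ℂ)) * (b : ℂ) ^ 2 * (k : ℂ) ^ 2 + 1) * ((u₂₀ : ℂ) - c) ^ 2
        = 0 →
      c.im = 0 ∧
      (c = (u₂₀ : ℂ)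
            + (a : ℂ) * (Real.sqrt ((1 + A) / ((1 + A) * b ^ 2 * k ^ 2 + 1)) : ℂ) ∨
       c = (u₂₀ : ℂ)
            - (a : ℂ) * (Real.sqrt ((1 + A) / ((1 + A) * b ^ 2 * k ^ 2 + 1)) : ℂ)) := by
  intro c hc
  set D : ℝ := (1 + A) * b ^ 2 * k ^ 2 + 1
  have hD : 0 < D := by positivity
  have hs : D * Real.sqrt ((1 + A) / D) ^ 2 = 1 + A := by
    rw [Real.sq_sqrt (by positivity)]
    field_simp
  have hsC : (D : ℂ) * (Real.sqrt ((1 + A) / D) : ℂ) ^ 2 = 1 + A := by exact_mod_cast hs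
  have hroots := eq_add_or_eq_sub_of_mul_sq_sub_mul_sq_eq_zero
    (Complex.ofReal_ne_zero.mpr hD.ne') hsC (by push_cast [D]; exact hc)
  refine ⟨?_, hroots⟩
  rcases hroots with rfl | rfl <;> simp

/-- For equal unperturbed velocities, every complex root `c` of
`(1 + A)a² - ((1 + A)b²k² + 1)(u₂₀ - c)² = 0` is real; explicitly
`c = u₂₀ ± a √((1 + A)/((1 + A)b²k² + 1))`. Hence the flow is linearly stable. -/
theorem stmt_19 (a b k A u₂₀ : ℝ) (ha : 0 < a) (hb : 0 ≤ b) (hA : 0 < A) :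
    ∀ c : ℂ,
      ((1 : ℂ) + (A : ℂ)) * (a : ℂ) ^ 2
        - (((1 : ℂ) + (A : ℂ)) * (b : ℂ) ^ 2 * (k : ℂ) ^ 2 + 1) * ((u₂₀ : ℂ) - c) ^ 2
        = 0 →
      c.im = 0 ∧
      (c = (u₂₀ : ℂ)
            + (a : ℂ) * (Real.sqrt ((1 + A) / ((1 + A) * b ^ 2 * k ^ 2 + 1)) : ℂ) ∨
       c = (u₂₀ : ℂ)
            - (a : ℂ) * (Real.sqrt ((1 + A) / ((1 + A) * b ^ 2 * k ^ 2 + 1)) : ℂ)) :=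
  stmt_19_general a b k A u₂₀ hA
end
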